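/- arXiv:2110.14887 — 4 statements merged into one kernel-verified Lean document; each statement's English description precedes it below -/
import Mathlib

section
/- Let λ ≠ 0 and C be constants. Suppose the functions P_n(t), Q_n(t) (with P_n never zero) satisfy both the discrete relations P_{n+1} = (λ Q_n + (v_n - λ)P_n)²/(λ u_n P_n) - C/(u_n P_n), Q_{n+1} = -((v_n - λ)/λ)P_n - Q_n, and the differential relations P_{n,t} = (u_n - u_{n-1} + v_n - λ)P_n + 2λ Q_n, Q_{n,t} = -u_{n-1}P_n + λ Q_n²/P_n - C/P_n, for all n and t, where u_n ≠ 0. Then the compatibility of the two systems (i.e., d/dt applied to the discrete relations being consistent with shifting the differential relations) holds if and only if u_n, v_n satisfy u_{n,t} = u_n(u_{n-1} - u_{n+1} + v_n - v_{n+1}) and v_{n,t} = v_n(u_{n-1} - u_n). -/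
/-!
The discrete system is equivalent to the two polynomial relations
`λ (Q_{n+1} + Q_n) + (v_n - λ) P_n = 0` and `u_n P_n P_{n+1} = λ Q_{n+1}² - C`
(the second because `λ Q_{n+1} = -(λ Q_n + (v_n - λ) P_n)`). Differentiating them in `t`, the
defects of the flow equations at levels `n`, `n + 1` and of the lattice equations at `n`
satisfy a linear system whose relevant coefficients `P_n`, `P_n P_{n+1}`, `u_n P_n`, `u_n P_{n+1}`,
`λ` are nonzero, so any two of "flow at `n`", "flow at `n + 1`", "lattice at `n`" imply the third.
Induction on `n` in both directions from the seed `n = 0` gives the equivalence.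
-/

namespace RuijsenaarsToda

-- The right-hand sides of `P_{n,t}` and `Q_{n,t}`; `b`, `a`, `v` stand for `u_{n-1}`, `u_n`, `v_n`.
def flowP (lam b a v P Q : ℝ) : ℝ := (a - b + v - lam) * P + 2 * lam * Q

noncomputable def flowQ (lam C b P Q : ℝ) : ℝ := -b * P + lam * Q ^ 2 / P - C / P

def IsLaxFlowAt (lam C b a v : ℝ) (P Q : ℝ → ℝ) (t : ℝ) : Prop :=
  HasDerivAt P (flowP lam b a v (P t) (Q t)) t ∧
    HasDerivAt Q (flowQ lam C b (P t) (Q t)) t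

section Pointwise

variable {lam C a b c v w P₀ Q₀ P₁ Q₁ : ℝ}

theorem relations_of_discrete (hlam : lam ≠ 0) (ha : a ≠ 0) (hP₀ : P₀ ≠ 0)
    (h : P₁ = (lam * Q₀ + (v - lam) * P₀) ^ 2 / (lam * a * P₀) - C / (a * P₀) ∧
      Q₁ = -((v - lam) / lam) * P₀ - Q₀) :
    lam * (Q₁ + Q₀) + (v - lam) * P₀ = 0 ∧ a * P₀ * P₁ = lam * Q₁ ^ 2 - C := by
  obtain ⟨rfl, rfl⟩ := h
  constructor <;> field_simp <;> ring

theorem flowQ_eq_of_mul_eq (hP₁ : P₁ ≠ 0) (h : a * P₀ * P₁ = lam * Q₁ ^ 2 - C) :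
    flowQ lam C a P₁ Q₁ = a * (P₀ - P₁) := by
  unfold flowQ
  field_simp
  linear_combination -h

theorem flow_lattice_defects {du dv dP₀ dQ₀ dP₁ dQ₁ : ℝ} (hP₀ : P₀ ≠ 0) (hP₁ : P₁ ≠ 0)
    (hR₁ : lam * (Q₁ + Q₀) + (v - lam) * P₀ = 0) (hR₂ : a * P₀ * P₁ = lam * Q₁ ^ 2 - C)
    (hD₁ : lam * (dQ₁ + dQ₀) + dv * P₀ + (v - lam) * dP₀ = 0)
    (hD₂ : du * P₀ * P₁ + a * dP₀ * P₁ + a * P₀ * dP₁ = 2 * lam * Q₁ * dQ₁) :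
    lam * (dQ₁ - flowQ lam C a P₁ Q₁) + lam * (dQ₀ - flowQ lam C b P₀ Q₀)
        + P₀ * (dv - v * (b - a)) + (v - lam) * (dP₀ - flowP lam b a v P₀ Q₀) = 0 ∧
      P₀ * P₁ * (du - a * (b - c + v - w)) + a * P₁ * (dP₀ - flowP lam b a v P₀ Q₀)
        + a * P₀ * (dP₁ - flowP lam a c w P₁ Q₁) = 2 * lam * Q₁ * (dQ₁ - flowQ lam C a P₁ Q₁) := by
  rw [flowQ_eq_of_mul_eq hP₁ hR₂]
  have hQ₀ : flowQ lam C b P₀ Q₀ * P₀ = -b * P₀ ^ 2 + lam * Q₀ ^ 2 - C := by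
    unfold flowQ; field_simp
  constructor
  · refine mul_left_cancel₀ hP₀ ?_
    unfold flowP
    linear_combination P₀ * hD₁ - (lam * (Q₁ + Q₀) + (v - lam) * P₀ - 2 * lam * Q₁) * hR₁
      + lam * hR₂ - lam * hQ₀
  · unfold flowP
    linear_combination hD₂ - 2 * a * P₁ * hR₁

end Pointwise

theorem eq_zero_of_hasDerivAt_of_forall_eq {f : ℝ → ℝ} {f' t c : ℝ} (hf : HasDerivAt f f' t)
    (h : ∀ s, f s = c) : f' = 0 :=
  hf.unique ((hasDerivAt_const t c).congr_of_eventuallyEq (.of_forall h))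

theorem differentiableAt_of_mul_eq {f g h : ℝ → ℝ} {t : ℝ} (hfg : ∀ s, f s * g s = h s)
    (hf₀ : ∀ s, f s ≠ 0) (hf : DifferentiableAt ℝ f t) (hh : DifferentiableAt ℝ h t) :
    DifferentiableAt ℝ g t := by
  have hg : g = fun s => h s / f s :=
    funext fun s => by rw [← hfg, mul_div_cancel_left₀ _ (hf₀ s)]
  rw [hg]
  exact hh.div hf (hf₀ t)

section Flow

variable {lam C t b c w : ℝ} {u v P₀ Q₀ P₁ Q₁ : ℝ → ℝ}

theorem relations_hasDerivAt (hR₁ : ∀ s, lam * (Q₁ s + Q₀ s) + (v s - lam) * P₀ s = 0)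
    (hR₂ : ∀ s, u s * P₀ s * P₁ s = lam * Q₁ s ^ 2 - C) {du dv dP₀ dQ₀ dP₁ dQ₁ : ℝ}
    (hu : HasDerivAt u du t) (hv : HasDerivAt v dv t) (hP₀ : HasDerivAt P₀ dP₀ t)
    (hQ₀ : HasDerivAt Q₀ dQ₀ t) (hP₁ : HasDerivAt P₁ dP₁ t) (hQ₁ : HasDerivAt Q₁ dQ₁ t) :
    lam * (dQ₁ + dQ₀) + dv * P₀ t + (v t - lam) * dP₀ = 0 ∧
      du * P₀ t * P₁ t + u t * dP₀ * P₁ t + u t * P₀ t * dP₁ = 2 * lam * Q₁ t * dQ₁ := by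
  constructor
  · have h := ((hQ₁.add hQ₀).const_mul lam).add ((hv.sub_const lam).mul hP₀)
    linear_combination eq_zero_of_hasDerivAt_of_forall_eq h hR₁
  · have h := ((hu.fun_mul hP₀).fun_mul hP₁).fun_sub ((hQ₁.fun_mul hQ₁).const_mul lam)
    linear_combination eq_zero_of_hasDerivAt_of_forall_eq h
      (fun s => show _ = -C by linear_combination hR₂ s)

theorem differentiableAt_add_of_relation (hlam : lam ≠ 0)
    (hR₁ : ∀ s, lam * (Q₁ s + Q₀ s) + (v s - lam) * P₀ s = 0)
    (hv : DifferentiableAt ℝ v t) (hP₀ : DifferentiableAt ℝ P₀ t) :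
    DifferentiableAt ℝ (fun s => Q₁ s + Q₀ s) t := by
  have hsum : (fun s => Q₁ s + Q₀ s) = fun s => -((v s - lam) * P₀ s) / lam :=
    funext fun s => by field_simp; linear_combination hR₁ s
  rw [hsum]
  fun_prop

theorem lattice_of_isLaxFlowAt {du dv : ℝ} (hP₀ : P₀ t ≠ 0) (hP₁ : P₁ t ≠ 0)
    (hR₁ : ∀ s, lam * (Q₁ s + Q₀ s) + (v s - lam) * P₀ s = 0)
    (hR₂ : ∀ s, u s * P₀ s * P₁ s = lam * Q₁ s ^ 2 - C)
    (hu : HasDerivAt u du t) (hv : HasDerivAt v dv t)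
    (h₀ : IsLaxFlowAt lam C b (u t) (v t) P₀ Q₀ t) (h₁ : IsLaxFlowAt lam C (u t) c w P₁ Q₁ t) :
    du = u t * (b - c + v t - w) ∧ dv = v t * (b - u t) := by
  obtain ⟨hD₁, hD₂⟩ := relations_hasDerivAt hR₁ hR₂ hu hv h₀.1 h₀.2 h₁.1 h₁.2
  obtain ⟨hE₁, hE₂⟩ :=
    flow_lattice_defects (b := b) (c := c) (w := w) hP₀ hP₁ (hR₁ t) (hR₂ t) hD₁ hD₂
  exact ⟨mul_left_cancel₀ (mul_ne_zero hP₀ hP₁) (by linear_combination hE₂),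
    mul_left_cancel₀ hP₀ (by linear_combination hE₁)⟩

theorem isLaxFlowAt_succ (hlam : lam ≠ 0) (hu₀ : ∀ s, u s ≠ 0) (hP₀ : ∀ s, P₀ s ≠ 0)
    (hP₁ : P₁ t ≠ 0) (hR₁ : ∀ s, lam * (Q₁ s + Q₀ s) + (v s - lam) * P₀ s = 0)
    (hR₂ : ∀ s, u s * P₀ s * P₁ s = lam * Q₁ s ^ 2 - C)
    (hu : HasDerivAt u (u t * (b - c + v t - w)) t) (hv : HasDerivAt v (v t * (b - u t)) t)
    (h₀ : IsLaxFlowAt lam C b (u t) (v t) P₀ Q₀ t) : IsLaxFlowAt lam C (u t) c w P₁ Q₁ t := by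
  have hQ₁d : DifferentiableAt ℝ Q₁ t := (h₀.2.differentiableAt.fun_add_iff_left).mp
    (differentiableAt_add_of_relation hlam hR₁ hv.differentiableAt h₀.1.differentiableAt)
  have hP₁d : DifferentiableAt ℝ P₁ t :=
    differentiableAt_of_mul_eq (f := fun s => u s * P₀ s) (h := fun s => lam * Q₁ s ^ 2 - C) hR₂
      (fun s => mul_ne_zero (hu₀ s) (hP₀ s)) (hu.differentiableAt.fun_mul h₀.1.differentiableAt)
      (((hQ₁d.pow 2).const_mul lam).sub_const C)
  obtain ⟨hD₁, hD₂⟩ := relations_hasDerivAt hR₁ hR₂ hu hv h₀.1 h₀.2 hP₁d.hasDerivAt hQ₁d.hasDerivAt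
  obtain ⟨hE₁, hE₂⟩ :=
    flow_lattice_defects (b := b) (c := c) (w := w) (hP₀ t) hP₁ (hR₁ t) (hR₂ t) hD₁ hD₂
  have hdQ₁ : deriv Q₁ t = flowQ lam C (u t) (P₁ t) (Q₁ t) :=
    mul_left_cancel₀ hlam (by linear_combination hE₁)
  have hdP₁ : deriv P₁ t = flowP lam (u t) c w (P₁ t) (Q₁ t) :=
    mul_left_cancel₀ (mul_ne_zero (hu₀ t) (hP₀ t))
      (by linear_combination hE₂ + 2 * lam * Q₁ t * hdQ₁)
  exact ⟨hdP₁ ▸ hP₁d.hasDerivAt, hdQ₁ ▸ hQ₁d.hasDerivAt⟩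

theorem isLaxFlowAt_pred (hlam : lam ≠ 0) (hu₀ : ∀ s, u s ≠ 0) (hP₁ : ∀ s, P₁ s ≠ 0)
    (hP₀ : P₀ t ≠ 0) (hR₁ : ∀ s, lam * (Q₁ s + Q₀ s) + (v s - lam) * P₀ s = 0)
    (hR₂ : ∀ s, u s * P₀ s * P₁ s = lam * Q₁ s ^ 2 - C)
    (hu : HasDerivAt u (u t * (b - c + v t - w)) t) (hv : HasDerivAt v (v t * (b - u t)) t)
    (h₁ : IsLaxFlowAt lam C (u t) c w P₁ Q₁ t) : IsLaxFlowAt lam C b (u t) (v t) P₀ Q₀ t := by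
  have hP₀d : DifferentiableAt ℝ P₀ t :=
    differentiableAt_of_mul_eq (f := fun s => u s * P₁ s) (h := fun s => lam * Q₁ s ^ 2 - C)
      (fun s => by linear_combination hR₂ s) (fun s => mul_ne_zero (hu₀ s) (hP₁ s))
      (hu.differentiableAt.fun_mul h₁.1.differentiableAt)
      (((h₁.2.differentiableAt.pow 2).const_mul lam).sub_const C)
  have hQ₀d : DifferentiableAt ℝ Q₀ t := (h₁.2.differentiableAt.fun_add_iff_right).mp
    (differentiableAt_add_of_relation hlam hR₁ hv.differentiableAt hP₀d)
  obtain ⟨hD₁, hD₂⟩ := relations_hasDerivAt hR₁ hR₂ hu hv hP₀d.hasDerivAt hQ₀d.hasDerivAt h₁.1 h₁.2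
  obtain ⟨hE₁, hE₂⟩ :=
    flow_lattice_defects (b := b) (c := c) (w := w) hP₀ (hP₁ t) (hR₁ t) (hR₂ t) hD₁ hD₂
  have hdP₀ : deriv P₀ t = flowP lam b (u t) (v t) (P₀ t) (Q₀ t) :=
    mul_left_cancel₀ (mul_ne_zero (hu₀ t) (hP₁ t)) (by linear_combination hE₂)
  have hdQ₀ : deriv Q₀ t = flowQ lam C b (P₀ t) (Q₀ t) :=
    mul_left_cancel₀ hlam (by linear_combination hE₁ - (v t - lam) * hdP₀)
  exact ⟨hdP₀ ▸ hP₀d.hasDerivAt, hdQ₀ ▸ hQ₀d.hasDerivAt⟩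

end Flow

end RuijsenaarsToda

open RuijsenaarsToda

/-- Theorem 3.1: the discrete system (GIM) and the differential system in `(P, Q)`
constitute a nonlinear Lax pair for the Ruijsenaars-Toda lattice: given that the
discrete relations hold identically and the differential relations hold at the seed
`n = 0`, the differential relations propagate to all `n` (i.e. the two systems are
compatible) if and only if `(u, v)` solves the lattice. -/
theorem rtl_nonlinear_lax_pair (lam C : ℝ) (hlam : lam ≠ 0)
    (u v u' v' P Q : ℤ → ℝ → ℝ)
    (hu0 : ∀ (n : ℤ) (t : ℝ), u n t ≠ 0)
    (hP0 : ∀ (n : ℤ) (t : ℝ), P n t ≠ 0)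
    (hu' : ∀ (n : ℤ) (t : ℝ), HasDerivAt (u n) (u' n t) t)
    (hv' : ∀ (n : ℤ) (t : ℝ), HasDerivAt (v n) (v' n t) t)
    (hdisc : ∀ (n : ℤ) (t : ℝ),
      P (n + 1) t = (lam * Q n t + (v n t - lam) * P n t) ^ 2 / (lam * u n t * P n t)
          - C / (u n t * P n t) ∧
      Q (n + 1) t = -((v n t - lam) / lam) * P n t - Q n t)
    (hseed : ∀ t : ℝ,
      HasDerivAt (P 0) ((u 0 t - u (-1) t + v 0 t - lam) * P 0 t + 2 * lam * Q 0 t) t ∧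
      HasDerivAt (Q 0)
        (-u (-1) t * P 0 t + lam * (Q 0 t) ^ 2 / P 0 t - C / P 0 t) t) :
    (∀ (n : ℤ) (t : ℝ),
        HasDerivAt (P n)
          ((u n t - u (n - 1) t + v n t - lam) * P n t + 2 * lam * Q n t) t ∧
        HasDerivAt (Q n)
          (-u (n - 1) t * P n t + lam * (Q n t) ^ 2 / P n t - C / P n t) t)
    ↔ (∀ (n : ℤ) (t : ℝ),
        u' n t = u n t * (u (n - 1) t - u (n + 1) t + v n t - v (n + 1) t) ∧
        v' n t = v n t * (u (n - 1) t - u n t)) := by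
  have hR₁ (n : ℤ) (s : ℝ) := (relations_of_discrete hlam (hu0 n s) (hP0 n s) (hdisc n s)).1
  have hR₂ (n : ℤ) (s : ℝ) := (relations_of_discrete hlam (hu0 n s) (hP0 n s) (hdisc n s)).2
  constructor
  · intro hflow n t
    have h₁ := hflow (n + 1) t
    rw [add_sub_cancel_right] at h₁
    exact lattice_of_isLaxFlowAt (hP0 n t) (hP0 (n + 1) t) (hR₁ n) (hR₂ n) (hu' n t) (hv' n t)
      (hflow n t) h₁
  · intro hlat n
    have hu (m : ℤ) (t : ℝ) := (hlat m t).1 ▸ hu' m t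
    have hv (m : ℤ) (t : ℝ) := (hlat m t).2 ▸ hv' m t
    induction n using Int.induction_on with
    | zero => exact hseed
    | succ k ih =>
      intro t
      rw [add_sub_cancel_right]
      exact isLaxFlowAt_succ hlam (hu0 k) (hP0 k) (hP0 (k + 1) t) (hR₁ k) (hR₂ k) (hu k t) (hv k t)
        (ih t)
    | pred k ih =>
      intro t
      refine isLaxFlowAt_pred hlam (hu0 _) (hP0 _) (hP0 _ t) (hR₁ _) (hR₂ _) (hu _ t) (hv _ t) ?_
      rw [sub_add_cancel]
      exact ih t
end

section
/- Let θ = ln(λ_2/λ_1) and w = λ_1 - λ_2 for constants λ_2 > λ_1 > 0, and let c be a real constant. Then the functions u_n(t) = λ_1 (e^{(n+1)θ + wt + c} + 1)/(e^{nθ + wt + c} + 1) and v_n(t) = -λ_1 (e^{nθ + wt + c} + 1)/(e^{(n-1)θ + wt + c} + 1) satisfy the Ruijsenaars-Toda system u_{n,t} = u_n(u_{n-1} - u_{n+1} + v_n - v_{n+1}), v_{n,t} = v_n(u_{n-1} - u_n) for all t ∈ ℝ and n ∈ ℤ. -/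
/-!
Writing `τₛ(t) = exp (sθ + wt + c) + 1`, the solution is `uₙ = λ₁ τₙ₊₁ / τₙ` and `vₙ = -uₙ₋₁`.
Substituting `vₙ = -uₙ₋₁`, both lattice equations reduce to the single equation
`u̇ₙ = uₙ (uₙ - uₙ₊₁)` (the second one at index `n - 1`). That equation holds because
`τₛ₊₁ - 1 = e^θ (τₛ - 1)` and `τ̇ₛ = w (τₛ - 1)`, with `w = λ₁ (1 - e^θ)`.
-/

open Real

namespace RuijsenaarsToda

noncomputable def tau (θ w c s t : ℝ) : ℝ := exp (s * θ + w * t + c) + 1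

noncomputable def kink (l1 θ w c s t : ℝ) : ℝ := l1 * tau θ w c (s + 1) t / tau θ w c s t

variable (θ w c : ℝ)

theorem tau_pos (s t : ℝ) : 0 < tau θ w c s t := by
  unfold tau; positivity

theorem tau_succ_sub_one (s t : ℝ) :
    tau θ w c (s + 1) t - 1 = exp θ * (tau θ w c s t - 1) := by
  simp only [tau, add_sub_cancel_right, ← exp_add]
  ring_nf

theorem hasDerivAt_tau (s t : ℝ) :
    HasDerivAt (tau θ w c s) (w * (tau θ w c s t - 1)) t := by
  have h : HasDerivAt (fun t ↦ s * θ + w * t + c) w t := by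
    simpa using ((hasDerivAt_id t).const_mul w).const_add (s * θ) |>.add_const c
  unfold tau
  simpa [mul_comm w] using h.exp.add_const 1

theorem hasDerivAt_kink {l1 : ℝ} (hw : w = l1 * (1 - exp θ)) (s t : ℝ) :
    HasDerivAt (kink l1 θ w c s)
      (kink l1 θ w c s t * (kink l1 θ w c s t - kink l1 θ w c (s + 1) t)) t := by
  have h0 := (tau_pos θ w c s t).ne'
  have h1 := (tau_pos θ w c (s + 1) t).ne'
  refine (((hasDerivAt_tau θ w c (s + 1) t).const_mul l1).div
    (hasDerivAt_tau θ w c s t) h0).congr_deriv ?_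
  have e1 := tau_succ_sub_one θ w c s t
  have e2 := tau_succ_sub_one θ w c (s + 1) t
  simp only [kink]
  field_simp
  rw [sub_eq_iff_eq_add.mp e2, sub_eq_iff_eq_add.mp e1, hw]
  ring

end RuijsenaarsToda

open RuijsenaarsToda

/-- The kink solution of the Ruijsenaars-Toda lattice in Toda-type form:
`u n t = λ₁ (e^{(n+1)θ+wt+c}+1)/(e^{nθ+wt+c}+1)`,
`v n t = -λ₁ (e^{nθ+wt+c}+1)/(e^{(n-1)θ+wt+c}+1)`, with `θ = ln(λ₂/λ₁)`,
`w = λ₁ - λ₂`, solves the lattice for all `t` and `n`. -/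
theorem rtl_kink_solution (l1 l2 c : ℝ) (h1 : 0 < l1) (h12 : l1 < l2)
    (θ w : ℝ) (hθ : θ = Real.log (l2 / l1)) (hw : w = l1 - l2)
    (u v : ℤ → ℝ → ℝ)
    (hu : ∀ (n : ℤ) (t : ℝ),
      u n t = l1 * (Real.exp (((n : ℝ) + 1) * θ + w * t + c) + 1)
        / (Real.exp ((n : ℝ) * θ + w * t + c) + 1))
    (hv : ∀ (n : ℤ) (t : ℝ),
      v n t = -l1 * (Real.exp ((n : ℝ) * θ + w * t + c) + 1)
        / (Real.exp (((n : ℝ) - 1) * θ + w * t + c) + 1)) :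
    ∀ (n : ℤ) (t : ℝ),
      HasDerivAt (u n)
        (u n t * (u (n - 1) t - u (n + 1) t + v n t - v (n + 1) t)) t ∧
      HasDerivAt (v n) (v n t * (u (n - 1) t - u n t)) t := by
  have hq : exp θ = l2 / l1 := by rw [hθ, exp_log (div_pos (h1.trans h12) h1)]
  have hw_exp : w = l1 * (1 - exp θ) := by rw [hw, hq]; field_simp
  have hu_eq : ∀ n : ℤ, u n = kink l1 θ w c n := fun n ↦ funext (hu n)
  have hv_eq : ∀ n : ℤ, v n = -u (n - 1) := by
    intro n; funext t
    rw [hv, Pi.neg_apply, hu]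
    push_cast
    ring_nf
  intro n t
  simp only [hv_eq, Pi.neg_apply, add_sub_cancel_right, hu_eq]
  push_cast
  constructor
  · exact (hasDerivAt_kink θ w c hw_exp n t).congr_deriv (by ring)
  · have h := (hasDerivAt_kink θ w c hw_exp (n - 1) t).neg
    rw [sub_add_cancel] at h
    exact h.congr_deriv (by ring)
end

section
/- Let F, G be the functions F(P,Q,u,v) = (λQ + (v-λ)P)²/(λuP) - C/(uP) and G(P,Q,v) = -((v-λ)/λ)P - Q (with λ ≠ 0, u ≠ 0, P ≠ 0). Suppose u_n, v_n solve the Ruijsenaars-Toda system u_{n,t} = u_n(u_{n-1}-u_{n+1}+v_n-v_{n+1}), v_{n,t} = v_n(u_{n-1}-u_n), and P_n, Q_n solve the linear system P_{n,t} = u_{n-1}P_{n-1} + (u_n-u_{n-1})P_n - u_nP_{n+1} + v_n(Q_n - Q_{n+1}), Q_{n,t} = u_{n-1}(P_{n-1} - P_n). If P_{n+1} = F(P_n,Q_n,u_n,v_n) and Q_{n+1} = G(P_n,Q_n,v_n) hold at some time t_0 for all n, then d/dt[P_{n+1} - F(P_n,Q_n,u_n,v_n)] = 0 and d/dt[Q_{n+1}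 - G(P_n,Q_n,v_n)] = 0 at t_0; i.e., the constraint surface is invariant under the flow. -/
/-!
Write `g n := λ (Q (n+1) + Q n) + (v n - λ) P n` and
`h n := u n P n P (n+1) - (λ Q (n+1)² - C)`. Since `λ Q n + (v n - λ) P n = g n - λ Q (n+1)`,
the two defects are `g n / λ` and `(h n + 2 g n Q (n+1) - g n² / λ) / (u n P n)`, so the
constraints at time `t₀` say exactly that every `g n` and `h n` vanishes there.
Along the flow, `P n · g n'` and `P n P (n+1) · h n'` are combinations of
`g n, g (n+1), h (n-1), h n, h (n+1)`, hence vanish at `t₀`; the defects vanish to second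
order in `g`, `h`, so their derivatives vanish too.
-/

theorem HasDerivAt.fun_div_of_apply_eq_zero {𝕜 : Type*} [NontriviallyNormedField 𝕜] {f g : 𝕜 → 𝕜}
    {x g' : 𝕜} (hf : HasDerivAt f 0 x) (hfx : f x = 0) (hg : HasDerivAt g g' x)
    (hgx : g x ≠ 0) : HasDerivAt (fun t => f t / g t) 0 x := by
  simpa [hfx] using hf.fun_div hg hgx

namespace RuijsenaarsToda

variable (lam C : ℝ) (u v P Q : ℤ → ℝ → ℝ)

def linearConstraint (n : ℤ) (t : ℝ) : ℝ :=
  lam * (Q (n + 1) t + Q n t) + (v n t - lam) * P n t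

def quadraticConstraint (n : ℤ) (t : ℝ) : ℝ :=
  u n t * P n t * P (n + 1) t - (lam * Q (n + 1) t ^ 2 - C)

variable {lam C u v P Q}

theorem Q_succ_sub_eq_div (hlam : lam ≠ 0) (n : ℤ) (t : ℝ) :
    Q (n + 1) t - (-((v n t - lam) / lam) * P n t - Q n t) =
      linearConstraint lam v P Q n t / lam := by
  unfold linearConstraint
  field_simp
  ring

theorem P_succ_sub_eq_div (hlam : lam ≠ 0) (n : ℤ) (t : ℝ) (hu : u n t ≠ 0) (hP : P n t ≠ 0) :
    P (n + 1) t - ((lam * Q n t + (v n t - lam) * P n t) ^ 2 / (lam * u n t * P n t)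
        - C / (u n t * P n t)) =
      (quadraticConstraint lam C u P Q n t + 2 * linearConstraint lam v P Q n t * Q (n + 1) t
        - linearConstraint lam v P Q n t ^ 2 / lam) / (u n t * P n t) := by
  unfold linearConstraint quadraticConstraint
  field_simp
  ring

theorem hasDerivAt_linearConstraint
    (hv : ∀ (n : ℤ) (t : ℝ), HasDerivAt (v n) (v n t * (u (n - 1) t - u n t)) t)
    (hP : ∀ (n : ℤ) (t : ℝ), HasDerivAt (P n)
      (u (n - 1) t * P (n - 1) t + (u n t - u (n - 1) t) * P n t
        - u n t * P (n + 1) t + v n t * (Q n t - Q (n + 1) t)) t)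
    (hQ : ∀ (n : ℤ) (t : ℝ), HasDerivAt (Q n)
      (u (n - 1) t * (P (n - 1) t - P n t)) t)
    (n : ℤ) (t : ℝ) (hPn : P n t ≠ 0) :
    HasDerivAt (linearConstraint lam v P Q n)
      (v n t * (quadraticConstraint lam C u P Q (n - 1) t - quadraticConstraint lam C u P Q n t
        + (Q n t - Q (n + 1) t) * linearConstraint lam v P Q n t) / P n t) t := by
  have hQ' := hQ (n + 1) t
  rw [add_sub_cancel_right] at hQ'
  refine (((hQ'.add (hQ n t)).const_mul lam).add
    (((hv n t).sub_const lam).mul (hP n t))).congr_deriv ?_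
  unfold linearConstraint quadraticConstraint
  rw [sub_add_cancel]
  field_simp
  ring

theorem hasDerivAt_quadraticConstraint
    (hu : ∀ (n : ℤ) (t : ℝ), HasDerivAt (u n)
      (u n t * (u (n - 1) t - u (n + 1) t + v n t - v (n + 1) t)) t)
    (hP : ∀ (n : ℤ) (t : ℝ), HasDerivAt (P n)
      (u (n - 1) t * P (n - 1) t + (u n t - u (n - 1) t) * P n t
        - u n t * P (n + 1) t + v n t * (Q n t - Q (n + 1) t)) t)
    (hQ : ∀ (n : ℤ) (t : ℝ), HasDerivAt (Q n)
      (u (n - 1) t * (P (n - 1) t - P n t)) t)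
    (n : ℤ) (t : ℝ) (hPn : P n t ≠ 0) (hPn1 : P (n + 1) t ≠ 0) :
    HasDerivAt (quadraticConstraint lam C u P Q n)
      (u n t * (P (n + 1) t ^ 2 * (quadraticConstraint lam C u P Q (n - 1) t
          - quadraticConstraint lam C u P Q n t)
        + P n t ^ 2 * (quadraticConstraint lam C u P Q n t
          - quadraticConstraint lam C u P Q (n + 1) t)
        + P (n + 1) t ^ 2 * (P n t + Q n t - Q (n + 1) t) * linearConstraint lam v P Q n t
        + P n t ^ 2 * (Q (n + 1) t - Q (n + 1 + 1) t - P (n + 1) t)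
          * linearConstraint lam v P Q (n + 1) t) / (P n t * P (n + 1) t)) t := by
  have hP' := hP (n + 1) t
  have hQ' := hQ (n + 1) t
  rw [add_sub_cancel_right] at hP' hQ'
  refine ((((hu n t).fun_mul (hP n t)).fun_mul hP').sub (((hQ'.pow 2).const_mul lam).sub_const C)
    ).congr_deriv ?_
  unfold linearConstraint quadraticConstraint
  rw [sub_add_cancel]
  field_simp
  ring

theorem linearConstraint_eq_zero (hlam : lam ≠ 0) {n : ℤ} {t : ℝ}
    (hQc : Q (n + 1) t = -((v n t - lam) / lam) * P n t - Q n t) :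
    linearConstraint lam v P Q n t = 0 :=
  (div_eq_zero_iff.1 ((Q_succ_sub_eq_div hlam n t).symm.trans (sub_eq_zero.2 hQc))).resolve_right
    hlam

theorem quadraticConstraint_eq_zero (hlam : lam ≠ 0) {n : ℤ} {t : ℝ} (hu : u n t ≠ 0)
    (hP : P n t ≠ 0)
    (hPc : P (n + 1) t = (lam * Q n t + (v n t - lam) * P n t) ^ 2 / (lam * u n t * P n t)
      - C / (u n t * P n t))
    (hQc : Q (n + 1) t = -((v n t - lam) / lam) * P n t - Q n t) :
    quadraticConstraint lam C u P Q n t = 0 := by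
  have hdefect := (P_succ_sub_eq_div hlam n t hu hP).symm.trans (sub_eq_zero.2 hPc)
  rw [linearConstraint_eq_zero hlam hQc] at hdefect
  simpa [hu, hP] using hdefect

end RuijsenaarsToda

open RuijsenaarsToda in
/-- Generalized invariant manifold property: if `(u, v)` solves the Ruijsenaars-Toda
lattice, `(P, Q)` solves the simplified linearized system, and the discrete
constraints `P_{n+1} = F(P_n,Q_n,u_n,v_n)`, `Q_{n+1} = G(P_n,Q_n,v_n)` hold at a
time `t₀` for all `n`, then the time derivative of each constraint vanishes at
`t₀`; i.e. the constraint surface is invariant under the flow. -/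
theorem gim_invariance (lam C : ℝ) (hlam : lam ≠ 0)
    (u v P Q : ℤ → ℝ → ℝ) (t₀ : ℝ)
    (hu0 : ∀ (n : ℤ) (t : ℝ), u n t ≠ 0)
    (hP0 : ∀ (n : ℤ) (t : ℝ), P n t ≠ 0)
    (hu : ∀ (n : ℤ) (t : ℝ), HasDerivAt (u n)
      (u n t * (u (n - 1) t - u (n + 1) t + v n t - v (n + 1) t)) t)
    (hv : ∀ (n : ℤ) (t : ℝ), HasDerivAt (v n) (v n t * (u (n - 1) t - u n t)) t)
    (hP : ∀ (n : ℤ) (t : ℝ), HasDerivAt (P n)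
      (u (n - 1) t * P (n - 1) t + (u n t - u (n - 1) t) * P n t
        - u n t * P (n + 1) t + v n t * (Q n t - Q (n + 1) t)) t)
    (hQ : ∀ (n : ℤ) (t : ℝ), HasDerivAt (Q n)
      (u (n - 1) t * (P (n - 1) t - P n t)) t)
    (hconstr : ∀ n : ℤ,
      P (n + 1) t₀ = (lam * Q n t₀ + (v n t₀ - lam) * P n t₀) ^ 2
          / (lam * u n t₀ * P n t₀) - C / (u n t₀ * P n t₀) ∧
      Q (n + 1) t₀ = -((v n t₀ - lam) / lam) * P n t₀ - Q n t₀) :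
    ∀ n : ℤ,
      HasDerivAt (fun t => P (n + 1) t
        - ((lam * Q n t + (v n t - lam) * P n t) ^ 2 / (lam * u n t * P n t)
          - C / (u n t * P n t))) 0 t₀ ∧
      HasDerivAt (fun t => Q (n + 1) t
        - (-((v n t - lam) / lam) * P n t - Q n t)) 0 t₀ := by
  intro n
  have hg (k : ℤ) : linearConstraint lam v P Q k t₀ = 0 :=
    linearConstraint_eq_zero hlam (hconstr k).2
  have hh (k : ℤ) : quadraticConstraint lam C u P Q k t₀ = 0 :=
    quadraticConstraint_eq_zero hlam (hu0 k t₀) (hP0 k t₀) (hconstr k).1 (hconstr k).2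
  have hg' : HasDerivAt (linearConstraint lam v P Q n) 0 t₀ :=
    (hasDerivAt_linearConstraint (C := C) hv hP hQ n t₀ (hP0 n t₀)).congr_deriv (by simp [hg, hh])
  have hh' : HasDerivAt (quadraticConstraint lam C u P Q n) 0 t₀ :=
    (hasDerivAt_quadraticConstraint hu hP hQ n t₀ (hP0 n t₀) (hP0 (n + 1) t₀)).congr_deriv
      (by simp [hg, hh])
  constructor
  · have hnum : HasDerivAt (fun t => quadraticConstraint lam C u P Q n t
        + 2 * linearConstraint lam v P Q n t * Q (n + 1) t
        - linearConstraint lam v P Q n t ^ 2 / lam) 0 t₀ := by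
      simpa [hg] using (hh'.fun_add ((hg'.const_mul 2).fun_mul (hQ (n + 1) t₀))).fun_sub
        ((hg'.pow 2).div_const lam)
    exact (hnum.fun_div_of_apply_eq_zero (by simp [hg, hh]) ((hu n t₀).fun_mul (hP n t₀))
      (mul_ne_zero (hu0 n t₀) (hP0 n t₀))).congr_of_eventuallyEq
      (Filter.Eventually.of_forall fun t => P_succ_sub_eq_div hlam n t (hu0 n t) (hP0 n t))
  · simpa using (hg'.div_const lam).congr_of_eventuallyEq
      (Filter.Eventually.of_forall fun t => Q_succ_sub_eq_div hlam n t)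
end

section
/- For λ_2 > λ_1 > 0, θ = ln(λ_2/λ_1), w = λ_1 - λ_2, c ∈ ℝ, the function γ_n(t) = λ_2(e^{(n-1)θ + wt + c} + 1)/(e^{nθ + wt + c} + 1) satisfies both γ_{n,t} = -(γ_n - λ_1)(γ_n - λ_2) and γ_{n+1} = λ_1λ_2/(λ_1 + λ_2 - γ_n) for all t ∈ ℝ and n ∈ ℤ. -/
/-!
Writing `E = exp (nθ + wt + c)`, the identity `exp θ = λ₂/λ₁` turns `γ_n` into the Möbius
profile `(λ₁E + λ₂)/(E + 1)`. Since `dE/dt = (λ₁ - λ₂)E`, this profile solves the Riccati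
equation `y' = -(y - λ₁)(y - λ₂)`, and the lattice shift `n ↦ n + 1` multiplies `E` by
`λ₂/λ₁`, which is exactly the Möbius map `y ↦ λ₁λ₂/(λ₁ + λ₂ - y)`.
-/

open Real

noncomputable section

def kink (a b x : ℝ) : ℝ := (a * exp x + b) / (exp x + 1)

lemma kink_pos {a b : ℝ} (ha : 0 < a) (hb : 0 < b) (x : ℝ) : 0 < kink a b x := by
  unfold kink; positivity

lemma add_sub_kink (a b x : ℝ) : a + b - kink a b x = kink b a x := by
  have hE : exp x + 1 ≠ 0 := by positivity
  unfold kink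
  field_simp
  ring

lemma kink_eq_mul_exp_sub_log {a b : ℝ} (ha : 0 < a) (hb : 0 < b) (x : ℝ) :
    kink a b x = b * (exp (x - log (b / a)) + 1) / (exp x + 1) := by
  rw [exp_sub, exp_log (div_pos hb ha), kink]
  field_simp

lemma kink_add_log {a b : ℝ} (ha : 0 < a) (hb : 0 < b) (x : ℝ) :
    kink a b (x + log (b / a)) = a * b / (a + b - kink a b x) := by
  have hE : exp x + 1 ≠ 0 := by positivity
  have hE' : b * exp x + a ≠ 0 := by positivity
  rw [add_sub_kink, kink, kink, exp_add, exp_log (div_pos hb ha)]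
  field_simp

lemma HasDerivAt.kink {a b t : ℝ} {g : ℝ → ℝ} (hg : HasDerivAt g (a - b) t) :
    HasDerivAt (fun s => kink a b (g s)) (-(kink a b (g t) - a) * (kink a b (g t) - b)) t := by
  have hE : Real.exp (g t) + 1 ≠ 0 := by positivity
  have hquot := ((hg.exp.const_mul a).add_const b).div (hg.exp.add_const 1) hE
  refine hquot.congr_deriv ?_
  unfold _root_.kink
  field_simp
  ring

end

/-- The explicit function `γ n t = λ₂(e^{(n-1)θ+wt+c}+1)/(e^{nθ+wt+c}+1)`, with
`θ = ln(λ₂/λ₁)`, `w = λ₁-λ₂`, `λ₂ > λ₁ > 0`, solves both the continuous Dubrovin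
equation `γ_{n,t} = -(γ_n-λ₁)(γ_n-λ₂)` and the discrete Dubrovin equation
`γ_{n+1} = λ₁λ₂/(λ₁+λ₂-γ_n)` for all `t ∈ ℝ`, `n ∈ ℤ`. -/
theorem dubrovin_kink_solution (l1 l2 c : ℝ) (h1 : 0 < l1) (h12 : l1 < l2)
    (θ w : ℝ) (hθ : θ = Real.log (l2 / l1)) (hw : w = l1 - l2)
    (γ : ℤ → ℝ → ℝ)
    (hγ : ∀ (n : ℤ) (t : ℝ),
      γ n t = l2 * (Real.exp (((n : ℝ) - 1) * θ + w * t + c) + 1)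
        / (Real.exp ((n : ℝ) * θ + w * t + c) + 1)) :
    ∀ (n : ℤ) (t : ℝ),
      HasDerivAt (γ n) (-(γ n t - l1) * (γ n t - l2)) t ∧
      l1 + l2 - γ n t ≠ 0 ∧
      γ (n + 1) t = l1 * l2 / (l1 + l2 - γ n t) := by
  have h2 : 0 < l2 := h1.trans h12
  have hγ_kink : ∀ (m : ℤ) (s : ℝ), γ m s = kink l1 l2 ((m : ℝ) * θ + w * s + c) := by
    intro m s
    rw [hγ, kink_eq_mul_exp_sub_log h1 h2, ← hθ]
    ring_nf
  intro n t
  refine ⟨?_, ?_, ?_⟩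
  · have hg : HasDerivAt (fun s => (n : ℝ) * θ + w * s + c) (l1 - l2) t := by
      simpa [hw] using ((hasDerivAt_id t).const_mul w).const_add ((n : ℝ) * θ) |>.add_const c
    rw [funext (hγ_kink n)]
    exact hg.kink
  · rw [hγ_kink, add_sub_kink]
    exact (kink_pos h2 h1 _).ne'
  · rw [hγ_kink, hγ_kink, Int.cast_add, Int.cast_one,
      show ((n : ℝ) + 1) * θ + w * t + c = (n * θ + w * t + c) + log (l2 / l1) by rw [hθ]; ring]
    exact kink_add_log h1 h2 _
end
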